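/- arXiv:1605.00901 — 5 statements merged into one kernel-verified Lean document; each statement's English description precedes it below -/
import Mathlib

section
/- A multiset A = {a1,...,at} of positive integers admits a partition into two parts with equal sums if and only if the following scheduling instance on two identical machines has a schedule with makespan T = (2t+3)·b, where b = (Σ a_i)/2: three chains of jobs J0 = (j0_1 ≺ ... ≺ j0_t) with processing times a_1,...,a_t, and J1, J2 each consisting of t+1 jobs of processing time 2b, scheduled non-preemptively on two machines respecting the chain precedence constraints. -/
/-!
Given a partition `A ⊔ Aᶜ` with both sums `b`, one machine runs the chain `J1` and the other `J2`,
and each short job `i` is slotted right after the `i`-th long job on the machine whose part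
contains `i`; neither machine is ever idle, and the short chain keeps its order because a long job
separates consecutive short jobs.

Conversely, the total work is twice the makespan, so in a schedule both machines are busy at every
instant: the short chain runs exactly when one of the long chains is idle. A long chain that is idle
at time `τ` has processed a multiple of `2b` by then, so its idle time up to `τ` is `≡ τ (mod 2b)`.
Sweeping through the short jobs in chain order, the finished ones can therefore always be split into
two parts whose sums are congruent mod `2b` to the idle times of `J1` and `J2`; at the makespan both
idle times equal `b`, and a subset sum in `[0, 2b]` congruent to `b` is `b`.
-/

open Finset

section Running

variable {ι : Type*} [Fintype ι]

def running (s p : ι → ℕ) (τ : ℕ) : Finset ι := {j | s j ≤ τ ∧ τ < s j + p j}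

variable {s p : ι → ℕ}

lemma mem_running {τ : ℕ} {j : ι} : j ∈ running s p τ ↔ τ ∈ Ico (s j) (s j + p j) := by
  simp [running]

lemma card_running_le_card {κ : Type*} [Fintype κ] (m : ι → κ)
    (h : ∀ i j, i ≠ j → m i = m j → Disjoint (Ico (s i) (s i + p i)) (Ico (s j) (s j + p j)))
    (τ : ℕ) : #(running s p τ) ≤ Fintype.card κ := by
  refine card_le_card_of_injOn m (fun _ _ => mem_coe.2 (mem_univ _)) fun i hi j hj hij => ?_
  by_contra hne
  exact disjoint_left.1 (h i j hne hij) (mem_running.1 hi) (mem_running.1 hj)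

lemma sum_card_running {T : ℕ} (hend : ∀ j, s j + p j ≤ T) :
    ∑ τ ∈ range T, #(running s p τ) = ∑ j, p j := by
  refine (sum_card_bipartiteAbove_eq_sum_card_bipartiteBelow
    (fun τ j => s j ≤ τ ∧ τ < s j + p j)).trans (sum_congr rfl fun j _ => ?_)
  have : (range T).bipartiteBelow (fun τ j => s j ≤ τ ∧ τ < s j + p j) j =
      Ico (s j) (s j + p j) := by
    ext τ; simp [bipartiteBelow]; have := hend j; omega
  simp [this]

lemma card_running_eq_of_sum_eq {T c : ℕ} (hcap : ∀ τ, #(running s p τ) ≤ c)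
    (hend : ∀ j, s j + p j ≤ T) (hwork : ∑ j, p j = c * T) {τ : ℕ} (hτ : τ < T) :
    #(running s p τ) = c := by
  have hsum : ∑ τ ∈ range T, #(running s p τ) = ∑ _τ ∈ range T, c := by
    rw [sum_card_running hend, hwork, sum_const, card_range, smul_eq_mul, mul_comm]
  exact (sum_eq_sum_iff_of_le fun τ _ => hcap τ).1 hsum τ (mem_range.2 hτ)

lemma card_running_sum {κ : Type*} [Fintype κ] (s p : ι ⊕ κ → ℕ) (τ : ℕ) :
    #(running s p τ) =
      #(running (fun i => s (.inl i)) (fun i => p (.inl i)) τ) +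
        #(running (fun k => s (.inr k)) (fun k => p (.inr k)) τ) := by
  simp only [running, card_filter, Fintype.sum_sum_type]

end Running

section Chain

variable {n : ℕ} {s p : Fin n → ℕ}

def IsPrecedenceChain (s p : Fin n → ℕ) : Prop :=
  ∀ (i : ℕ) (h : i + 1 < n), s ⟨i, Nat.lt_of_succ_lt h⟩ + p ⟨i, Nat.lt_of_succ_lt h⟩ ≤ s ⟨i + 1, h⟩

lemma IsPrecedenceChain.add_le (hc : IsPrecedenceChain s p) {i j : Fin n} (hij : i < j) :
    s i + p i ≤ s j := by
  obtain ⟨j, hj⟩ := j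
  induction j with
  | zero => exact absurd hij (Nat.not_lt_zero _)
  | succ j ih =>
    have hstep := hc j hj
    rcases Nat.lt_or_ge (i : ℕ) j with hlt | hge
    · have := ih (Nat.lt_of_succ_lt hj) (Fin.lt_def.2 hlt)
      omega
    · obtain rfl : i = ⟨j, Nat.lt_of_succ_lt hj⟩ :=
        Fin.ext (by rw [Fin.lt_def] at hij; simp at hij ⊢; omega)
      exact hstep

lemma IsPrecedenceChain.monotone (hc : IsPrecedenceChain s p) : Monotone s := by
  intro i j hij
  rcases hij.lt_or_eq with hlt | rfl
  · exact (Nat.le_add_right _ _).trans (hc.add_le hlt)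
  · rfl

lemma IsPrecedenceChain.pairwise_disjoint (hc : IsPrecedenceChain s p) :
    Pairwise fun i j => Disjoint (Ico (s i) (s i + p i)) (Ico (s j) (s j + p j)) := by
  intro i j hij
  rw [disjoint_left]
  intro τ hi hj
  simp only [mem_Ico] at hi hj
  rcases hij.lt_or_gt with h | h
  · have := hc.add_le h; omega
  · have := hc.add_le h; omega

lemma IsPrecedenceChain.card_running_le_one (hc : IsPrecedenceChain s p) (τ : ℕ) :
    #(running s p τ) ≤ 1 :=
  card_running_le_card (fun _ => ()) (fun _ _ hij _ => hc.pairwise_disjoint hij) τ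

end Chain

section IdleTime

variable {ι : Type*} [Fintype ι] [DecidableEq ι] {s p : ι → ℕ}
  (hdisj : Pairwise fun i j => Disjoint (Ico (s i) (s i + p i)) (Ico (s j) (s j + p j)))
include hdisj

lemma count_idle_add_sum_eq {x : ℕ} (hx : running s p x = ∅) :
    Nat.count (fun y => running s p y = ∅) x + ∑ j with s j + p j ≤ x, p j = x := by
  have hbusy : {y ∈ range x | ¬ running s p y = ∅} =
      ({j | s j + p j ≤ x} : Finset ι).biUnion fun j => Ico (s j) (s j + p j) := by
    ext y
    simp only [mem_filter, mem_range, ← nonempty_iff_ne_empty, mem_biUnion, mem_univ, true_and]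
    constructor
    · rintro ⟨hy, j, hj⟩
      have hjx : j ∉ running s p x := by simp [hx]
      rw [mem_running, mem_Ico] at hj hjx
      exact ⟨j, by omega, mem_Ico.2 hj⟩
    · rintro ⟨j, hj, hy⟩
      exact ⟨by simp at hy; omega, j, mem_running.2 hy⟩
  have hsplit := card_filter_add_card_filter_not (s := range x) (fun y => running s p y = ∅)
  rw [hbusy, card_biUnion fun i _ j _ hij => hdisj hij, card_range] at hsplit
  simpa [Nat.count_eq_card_filter_range] using hsplit

lemma natCast_count_idle_of_dvd {L : ℕ} (hL : ∀ j, L ∣ p j) {x : ℕ} (hx : running s p x = ∅) :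
    (Nat.count (fun y => running s p y = ∅) x : ZMod L) = x := by
  have hsum : ((∑ j with s j + p j ≤ x, p j : ℕ) : ZMod L) = 0 :=
    (ZMod.natCast_eq_zero_iff _ _).2 (dvd_sum fun j _ => hL j)
  simpa [hsum] using congrArg (Nat.cast : ℕ → ZMod L) (count_idle_add_sum_eq hdisj hx)

lemma count_idle_add_sum_eq_of_forall_le {T : ℕ} (hend : ∀ j, s j + p j ≤ T) :
    Nat.count (fun y => running s p y = ∅) T + ∑ j, p j = T := by
  have hT : running s p T = ∅ := by
    ext j; simp only [mem_running, mem_Ico, notMem_empty, iff_false]; have := hend j; omega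
  simpa [filter_true_of_mem fun j _ => hend j] using count_idle_add_sum_eq hdisj hT

end IdleTime

section Count

variable {p q : ℕ → Prop} [DecidablePred p] [DecidablePred q]

lemma Nat.count_eq_of_forall_not {x z : ℕ} (hxz : x ≤ z) (h : ∀ y, x ≤ y → y < z → ¬p y) :
    Nat.count p z = Nat.count p x := by
  obtain ⟨c, rfl⟩ := Nat.exists_eq_add_of_le hxz
  rw [Nat.count_add, (Nat.count_iff_forall_not (p := fun k => p (x + k))).2
    fun m hm => h _ (by omega) (by omega), add_zero]

lemma Nat.count_add_count_of_forall_iff_not {x c : ℕ} (h : ∀ y, x ≤ y → y < x + c → (p y ↔ ¬q y)) :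
    Nat.count p (x + c) + Nat.count q (x + c) = Nat.count p x + Nat.count q x + c := by
  induction c with
  | zero => rfl
  | succ c ih =>
    rw [← add_assoc, Nat.count_succ, Nat.count_succ]
    have := ih fun y hy hyc => h y hy (by omega)
    have hpq := h (x + c) (by omega) (by omega)
    split_ifs <;> first | omega | tauto

end Count

section SplitsMod

variable {ι : Type*} [DecidableEq ι] {L : ℕ} {a : ι → ℕ}

def SplitsMod (L : ℕ) (a : ι → ℕ) (F : Finset ι) (d e : ZMod L) : Prop :=
  ∃ A ⊆ F, ((∑ i ∈ A, a i : ℕ) : ZMod L) = d ∧ ((∑ i ∈ F \ A, a i : ℕ) : ZMod L) = e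

lemma SplitsMod.insert_of_modEq {F : Finset ι} {i : ι} {d e d' e' x : ZMod L}
    (hF : SplitsMod L a F d e) (hi : i ∉ F) (hsum : d' + e' = d + e + a i)
    (hstart : d = x ∨ e = x) (hend : d' = x + a i ∨ e' = x + a i) :
    SplitsMod L a (insert i F) d' e' := by
  obtain ⟨A, hAF, hA, hB⟩ := hF
  have hiA : i ∉ A := fun h => hi (hAF h)
  have hiB : i ∉ F \ A := fun h => hi (mem_sdiff.1 h).1
  have hcompA : insert i F \ insert i A = F \ A := by
    rw [insert_sdiff_insert, sdiff_insert_of_notMem hi]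
  have hcompB : insert i F \ insert i (F \ A) = A := by
    rw [insert_sdiff_insert, sdiff_insert_of_notMem hi, Finset.sdiff_sdiff_eq_self hAF]
  have hcompA' : insert i F \ A = insert i (F \ A) := insert_sdiff_of_notMem _ hiA
  have hcompB' : insert i F \ (F \ A) = insert i A := by
    rw [insert_sdiff_of_notMem _ hiB, Finset.sdiff_sdiff_eq_self hAF]
  rcases hstart with hstart | hstart <;> rcases hend with hend | hend
  · refine ⟨insert i A, insert_subset_insert i hAF, ?_, ?_⟩
    · rw [sum_insert hiA, Nat.cast_add]; linear_combination hA + hstart - hend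
    · rw [hcompA]; linear_combination hB + hend - hstart - hsum
  · refine ⟨F \ A, sdiff_subset.trans (subset_insert i F), ?_, ?_⟩
    · linear_combination hB - hsum + hend - hstart
    · rw [hcompB', sum_insert hiA, Nat.cast_add]; linear_combination hA + hstart - hend
  · refine ⟨insert i (F \ A), insert_subset_insert i sdiff_subset, ?_, ?_⟩
    · rw [sum_insert hiB, Nat.cast_add]; linear_combination hB + hstart - hend
    · rw [hcompB]; linear_combination hA - hsum + hend - hstart
  · refine ⟨A, hAF.trans (subset_insert i F), ?_, ?_⟩
    · linear_combination hA - hsum + hend - hstart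
    · rw [hcompA', sum_insert hiB, Nat.cast_add]; linear_combination hB + hstart - hend

lemma natCast_count_succ {r : ℕ → Prop} [DecidablePred r]
    (hmod : ∀ y, r y → (Nat.count r y : ZMod L) = y) {y : ℕ} (hy : r y) :
    (Nat.count r (y + 1) : ZMod L) = y + 1 := by
  rw [Nat.count_succ, if_pos hy, Nat.cast_add, hmod y hy, Nat.cast_one]

variable {idle₁ idle₂ : ℕ → Prop} [DecidablePred idle₁] [DecidablePred idle₂]
  (hmod₁ : ∀ y, idle₁ y → (Nat.count idle₁ y : ZMod L) = y)
  (hmod₂ : ∀ y, idle₂ y → (Nat.count idle₂ y : ZMod L) = y)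
include hmod₁ hmod₂

/-- Which of `idle₁`, `idle₂` holds at the first and at the last instant of the job decides whether
it joins a part and whether the two parts trade places. -/
lemma SplitsMod.insert_of_forall_iff_not {F : Finset ι} {i : ι} {x : ℕ}
    (hF : SplitsMod L a F (Nat.count idle₁ x) (Nat.count idle₂ x)) (hi : i ∉ F)
    (hxor : ∀ y, x ≤ y → y < x + a i → (idle₁ y ↔ ¬idle₂ y)) :
    SplitsMod L a (insert i F) (Nat.count idle₁ (x + a i)) (Nat.count idle₂ (x + a i)) := by
  have hsum : (Nat.count idle₁ (x + a i) : ZMod L) + Nat.count idle₂ (x + a i) =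
      Nat.count idle₁ x + Nat.count idle₂ x + a i := by
    simpa using congrArg (Nat.cast : ℕ → ZMod L) (Nat.count_add_count_of_forall_iff_not hxor)
  rcases Nat.eq_zero_or_pos (a i) with h0 | hpos
  · exact hF.insert_of_modEq hi hsum (Or.inl rfl) (Or.inl (by simp [h0]))
  refine hF.insert_of_modEq hi hsum (x := x) ?_ ?_
  · by_cases h : idle₁ x
    · exact Or.inl (hmod₁ x h)
    · exact Or.inr (hmod₂ x (by have := hxor x le_rfl (by omega); tauto))
  · obtain ⟨y, hy⟩ : ∃ y, x + a i = y + 1 := ⟨x + a i - 1, by omega⟩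
    have hxy : ((x + a i : ℕ) : ZMod L) = y + 1 := by rw [hy]; push_cast; rfl
    push_cast at hxy
    rw [hxy, hy]
    by_cases h : idle₁ y
    · exact Or.inl (natCast_count_succ hmod₁ h)
    · exact Or.inr (natCast_count_succ hmod₂ (by have := hxor y (by omega) (by omega); tauto))

end SplitsMod

section Sweep

variable {L t T : ℕ} {σ a : Fin t → ℕ} {idle₁ idle₂ : ℕ → Prop}
  [DecidablePred idle₁] [DecidablePred idle₂]
  (hmod₁ : ∀ y, idle₁ y → (Nat.count idle₁ y : ZMod L) = y)
  (hmod₂ : ∀ y, idle₂ y → (Nat.count idle₂ y : ZMod L) = y)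
  (hc : IsPrecedenceChain σ a) (hend : ∀ i, σ i + a i ≤ T)
  (hxor : ∀ y < T, (running σ a y).Nonempty → (idle₁ y ↔ ¬idle₂ y))
  (hboth : ∀ y < T, running σ a y = ∅ → ¬idle₁ y ∧ ¬idle₂ y)
include hmod₁ hmod₂ hc hend hxor hboth

lemma splitsMod_prefix {n : ℕ} (hn : n ≤ t) {x : ℕ} (hxT : x ≤ T)
    (hdone : ∀ i : Fin t, (i : ℕ) < n → σ i + a i ≤ x) (hnext : ∀ i : Fin t, n ≤ i → x ≤ σ i) :
    SplitsMod L a {i | (i : ℕ) < n} (Nat.count idle₁ x) (Nat.count idle₂ x) := by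
  have hgap : ∀ x z, x ≤ z → z ≤ T → (∀ i, σ i + a i ≤ x ∨ z ≤ σ i) →
      Nat.count idle₁ z = Nat.count idle₁ x ∧ Nat.count idle₂ z = Nat.count idle₂ x := by
    intro x z hxz hzT hsep
    have hfree : ∀ y, x ≤ y → y < z → ¬idle₁ y ∧ ¬idle₂ y := fun y hxy hyz => by
      refine hboth y (by omega) (eq_empty_of_forall_notMem fun i hi => ?_)
      rw [mem_running, mem_Ico] at hi
      have := hsep i; omega
    exact ⟨Nat.count_eq_of_forall_not hxz fun y h₁ h₂ => (hfree y h₁ h₂).1,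
      Nat.count_eq_of_forall_not hxz fun y h₁ h₂ => (hfree y h₁ h₂).2⟩
  induction n generalizing x with
  | zero =>
    obtain ⟨h₁, h₂⟩ := hgap 0 x (Nat.zero_le x) hxT fun i => Or.inr (hnext i (Nat.zero_le _))
    refine ⟨∅, empty_subset _, ?_, ?_⟩ <;> simp [h₁, h₂]
  | succ n ih =>
    set i : Fin t := ⟨n, hn⟩
    have hprev := ih (by omega) (x := σ i) ((Nat.le_add_right _ _).trans (hend i))
      (fun j hj => hc.add_le (Fin.lt_def.2 hj)) (fun j hj => hc.monotone (Fin.le_def.2 hj))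
    have hstep := hprev.insert_of_forall_iff_not hmod₁ hmod₂ (i := i) (by simp [i])
      fun y h₁ h₂ => hxor y (by have := hend i; omega) ⟨i, mem_running.2 (mem_Ico.2 ⟨h₁, h₂⟩)⟩
    obtain ⟨h₁, h₂⟩ := hgap (σ i + a i) x (hdone i (by simp [i])) hxT fun j => by
      rcases Nat.lt_trichotomy j n with hj | hj | hj
      · have := hc.add_le (i := j) (j := i) (Fin.lt_def.2 hj); omega
      · left; rw [show j = i from Fin.ext hj]
      · exact Or.inr (hnext j hj)
    have hF : ({j | (j : ℕ) < n + 1} : Finset (Fin t)) =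
        insert i ({j | (j : ℕ) < n} : Finset (Fin t)) := by
      ext j; simp [i, Fin.ext_iff]; omega
    rwa [hF, h₁, h₂]

lemma splitsMod_univ : SplitsMod L a univ (Nat.count idle₁ T) (Nat.count idle₂ T) := by
  simpa using splitsMod_prefix hmod₁ hmod₂ hc hend hxor hboth le_rfl le_rfl
    (fun i _ => hend i) (fun i hi => absurd i.isLt (by omega))

end Sweep

lemma eq_of_natCast_eq_of_le_two_mul {x b : ℕ} (h : (x : ZMod (2 * b)) = b) (hx : x ≤ 2 * b) :
    x = b := by
  rw [ZMod.natCast_eq_natCast_iff'] at h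
  rcases Nat.eq_zero_or_pos b with rfl | hb
  · omega
  rw [Nat.mod_eq_of_lt (by omega : b < 2 * b)] at h
  rcases hx.lt_or_eq with hx | rfl
  · rwa [Nat.mod_eq_of_lt hx] at h
  · simp at h; omega

section ThreeChains

variable {t b : ℕ}

abbrev procTime (a : Fin t → ℕ) (b : ℕ) : Fin t ⊕ (Fin (t + 1) ⊕ Fin (t + 1)) → ℕ :=
  Sum.elim a (Sum.elim (fun _ => 2 * b) fun _ => 2 * b)

lemma count_idle_long_chain {u : Fin (t + 1) → ℕ} (hu : IsPrecedenceChain u fun _ => 2 * b)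
    (hend : ∀ k, u k + 2 * b ≤ (2 * t + 3) * b) :
    Nat.count (fun y => running u (fun _ => 2 * b) y = ∅) ((2 * t + 3) * b) = b := by
  have := count_idle_add_sum_eq_of_forall_le hu.pairwise_disjoint hend
  simp only [sum_const, card_univ, Fintype.card_fin, smul_eq_mul] at this
  nlinarith

lemma exists_sum_eq_sum_compl_of_splitsMod {a : Fin t → ℕ} (hb : ∑ i, a i = 2 * b)
    {e : ZMod (2 * b)} (h : SplitsMod (2 * b) a univ b e) :
    ∃ A : Finset (Fin t), ∑ i ∈ A, a i = ∑ i ∈ Aᶜ, a i := by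
  obtain ⟨A, -, hA, -⟩ := h
  have hsum := sum_add_sum_compl A a
  have := eq_of_natCast_eq_of_le_two_mul hA (by omega)
  exact ⟨A, by omega⟩

variable {a : Fin t → ℕ} {s : Fin t ⊕ (Fin (t + 1) ⊕ Fin (t + 1)) → ℕ}

lemma card_running_chains_eq_two (hb : ∑ i, a i = 2 * b)
    (hcap : ∀ τ, #(running s (procTime a b) τ) ≤ 2)
    (hend : ∀ j, s j + procTime a b j ≤ (2 * t + 3) * b) {τ : ℕ} (hτ : τ < (2 * t + 3) * b) :
    #(running (fun i => s (.inl i)) a τ) +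
      #(running (fun k => s (.inr (.inl k))) (fun _ => 2 * b) τ) +
        #(running (fun k => s (.inr (.inr k))) (fun _ => 2 * b) τ) = 2 := by
  have hwork : ∑ j, procTime a b j = 2 * ((2 * t + 3) * b) := by
    simp [Fintype.sum_sum_type, hb]; ring
  have := card_running_eq_of_sum_eq hcap hend hwork hτ
  rw [card_running_sum, card_running_sum (fun k => s (.inr k))] at this
  rw [add_assoc]
  exact this

variable (h₀ : IsPrecedenceChain (fun i => s (.inl i)) a)
  (h₁ : IsPrecedenceChain (fun k => s (.inr (.inl k))) fun _ => 2 * b)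
  (h₂ : IsPrecedenceChain (fun k => s (.inr (.inr k))) fun _ => 2 * b)
include h₀ h₁ h₂

lemma exists_sum_eq_sum_compl_of_schedule (hb : ∑ i, a i = 2 * b)
    (hcap : ∀ τ, #(running s (procTime a b) τ) ≤ 2)
    (hmk : univ.sup (fun j => s j + procTime a b j) = (2 * t + 3) * b) :
    ∃ A : Finset (Fin t), ∑ i ∈ A, a i = ∑ i ∈ Aᶜ, a i := by
  have hend : ∀ j, s j + procTime a b j ≤ (2 * t + 3) * b := fun j =>
    hmk ▸ le_sup (f := fun j => s j + procTime a b j) (mem_univ j)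
  have hchains := fun y (hy : y < (2 * t + 3) * b) =>
    And.intro (card_running_chains_eq_two hb hcap hend hy) <| And.intro (h₀.card_running_le_one y)
      (And.intro (h₁.card_running_le_one y) (h₂.card_running_le_one y))
  have hsplit := splitsMod_univ
    (fun _ => natCast_count_idle_of_dvd h₁.pairwise_disjoint fun _ => dvd_rfl)
    (fun _ => natCast_count_idle_of_dvd h₂.pairwise_disjoint fun _ => dvd_rfl)
    h₀ (fun i => hend (.inl i))
    (fun y hy hbusy => by
      have := hchains y hy
      rw [← card_pos] at hbusy; simp only [← card_eq_zero]; omega)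
    (fun y hy hfree => by
      have := hchains y hy
      rw [← card_eq_zero] at hfree; simp only [← card_eq_zero]; omega)
  rw [count_idle_long_chain h₁ fun k => hend (.inr (.inl k))] at hsplit
  exact exists_sum_eq_sum_compl_of_splitsMod hb hsplit

end ThreeChains

section PartitionSchedule

variable {t : ℕ} (a : Fin t → ℕ) (b : ℕ)

def prefixSum (D : Finset (Fin t)) (k : ℕ) : ℕ := ∑ i ∈ D with i.val < k, a i

lemma prefixSum_mono (D : Finset (Fin t)) : Monotone (prefixSum a D) := fun _ _ hkl =>
  sum_le_sum_of_subset fun _ => by simp only [mem_filter]; exact fun h => ⟨h.1, by omega⟩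

lemma prefixSum_le (D : Finset (Fin t)) (k : ℕ) : prefixSum a D k ≤ ∑ i ∈ D, a i :=
  sum_le_sum_of_subset (filter_subset _ _)

lemma prefixSum_of_le (D : Finset (Fin t)) {k : ℕ} (hk : t ≤ k) :
    prefixSum a D k = ∑ i ∈ D, a i := by
  rw [prefixSum, filter_true_of_mem fun i _ => i.isLt.trans_le hk]

lemma prefixSum_succ_of_mem {D : Finset (Fin t)} {i : Fin t} (hi : i ∈ D) :
    prefixSum a D (i.val + 1) = prefixSum a D i + a i := by
  have : {j ∈ D | j.val < i.val + 1} = insert i {j ∈ D | j.val < i.val} := by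
    ext j; simp only [mem_filter, mem_insert, Fin.ext_iff]; grind
  rw [prefixSum, prefixSum, this, sum_insert (by simp), add_comm]

/-- A machine runs the long jobs `J_0, …, J_t` of length `2b` back to back, each `J_i` (`i < t`)
followed by the short job `i` when `i ∈ D`: slot `2k` holds `J_k`, slot `2i + 1` holds the short
job `i` (and is empty if `i ∉ D`), and `machineTime D n` is the time at which slot `n` starts. -/
def machineTime (D : Finset (Fin t)) (n : ℕ) : ℕ := 2 * b * ((n + 1) / 2) + prefixSum a D (n / 2)

lemma machineTime_mono (D : Finset (Fin t)) : Monotone (machineTime a b D) := fun _ _ h =>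
  add_le_add (Nat.mul_le_mul_left _ (Nat.div_le_div_right (by omega)))
    (prefixSum_mono a D (Nat.div_le_div_right h))

lemma machineTime_two_mul (D : Finset (Fin t)) (k : ℕ) :
    machineTime a b D (2 * k) = 2 * b * k + prefixSum a D k := by
  rw [machineTime, show (2 * k + 1) / 2 = k by omega, show 2 * k / 2 = k by omega]

lemma machineTime_two_mul_add_one (D : Finset (Fin t)) (k : ℕ) :
    machineTime a b D (2 * k + 1) = 2 * b * (k + 1) + prefixSum a D k := by
  rw [machineTime, show (2 * k + 1 + 1) / 2 = k + 1 by omega, show (2 * k + 1) / 2 = k by omega]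

lemma machineTime_two_mul_add_one_eq_add (D : Finset (Fin t)) (k : ℕ) :
    machineTime a b D (2 * k + 1) = machineTime a b D (2 * k) + 2 * b := by
  rw [machineTime_two_mul, machineTime_two_mul_add_one]; ring

lemma machineTime_two_mul_add_one_self {D : Finset (Fin t)} (hD : ∑ i ∈ D, a i = b) :
    machineTime a b D (2 * t + 1) = (2 * t + 3) * b := by
  rw [machineTime_two_mul_add_one, prefixSum_of_le a D le_rfl, hD]; ring

lemma machineTime_disjoint (D : Finset (Fin t)) {m n : ℕ} (hmn : m ≠ n) :
    Disjoint (Ico (machineTime a b D m) (machineTime a b D (m + 1)))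
      (Ico (machineTime a b D n) (machineTime a b D (n + 1))) := by
  rw [disjoint_left]
  intro τ hm hn
  simp only [mem_Ico] at hm hn
  rcases hmn.lt_or_gt with h | h
  · have := machineTime_mono a b D (show m + 1 ≤ n by omega); omega
  · have := machineTime_mono a b D (show n + 1 ≤ m by omega); omega

lemma isPrecedenceChain_machineTime (D : Finset (Fin t)) :
    IsPrecedenceChain (n := t + 1) (fun k => machineTime a b D (2 * k)) fun _ => 2 * b :=
  fun k _ => by
    show machineTime a b D (2 * k) + 2 * b ≤ machineTime a b D (2 * (k + 1))
    rw [← machineTime_two_mul_add_one_eq_add]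
    exact machineTime_mono a b D (by omega)

variable (A : Finset (Fin t))

def machineOf : Fin t ⊕ (Fin (t + 1) ⊕ Fin (t + 1)) → Bool
  | .inl i => decide (i ∈ A)
  | .inr (.inl _) => true
  | .inr (.inr _) => false

def slotOf : Fin t ⊕ (Fin (t + 1) ⊕ Fin (t + 1)) → ℕ
  | .inl i => 2 * i + 1
  | .inr (.inl k) => 2 * k
  | .inr (.inr k) => 2 * k

lemma slotOf_le (j : Fin t ⊕ (Fin (t + 1) ⊕ Fin (t + 1))) : slotOf j ≤ 2 * t := by
  rcases j with i | k | k <;> simp only [slotOf] <;> omega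

lemma slotOf_ne {i j : Fin t ⊕ (Fin (t + 1) ⊕ Fin (t + 1))} (hij : i ≠ j)
    (hm : machineOf A i = machineOf A j) : slotOf i ≠ slotOf j := by
  rcases i with i | i | i <;> rcases j with j | j | j <;>
    simp_all [machineOf, slotOf, Fin.ext_iff] <;> omega

def partitionSchedule (j : Fin t ⊕ (Fin (t + 1) ⊕ Fin (t + 1))) : ℕ :=
  machineTime a b (bif machineOf A j then A else Aᶜ) (slotOf j)

lemma partitionSchedule_add_procTime (j : Fin t ⊕ (Fin (t + 1) ⊕ Fin (t + 1))) :
    partitionSchedule a b A j + procTime a b j =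
      machineTime a b (bif machineOf A j then A else Aᶜ) (slotOf j + 1) := by
  rcases j with i | k | k
  · have hi : i ∈ bif decide (i ∈ A) then A else Aᶜ := by by_cases h : i ∈ A <;> simp [h]
    simp only [partitionSchedule, machineOf, slotOf, procTime, Sum.elim_inl]
    rw [machineTime_two_mul_add_one, show 2 * (i : ℕ) + 1 + 1 = 2 * (i + 1) by ring,
      machineTime_two_mul, prefixSum_succ_of_mem a hi]
    ring
  all_goals
    simp only [partitionSchedule, machineOf, slotOf, procTime, Sum.elim_inr, Sum.elim_inl]
    rw [machineTime_two_mul, machineTime_two_mul_add_one]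
    ring

lemma card_running_partitionSchedule_le_two (τ : ℕ) :
    #(running (partitionSchedule a b A) (procTime a b) τ) ≤ 2 :=
  card_running_le_card (machineOf A) (fun i j hij hm => by
    rw [partitionSchedule_add_procTime, partitionSchedule_add_procTime]
    unfold partitionSchedule
    rw [hm]
    exact machineTime_disjoint a b _ (slotOf_ne A hij hm)) τ

variable {A} (hload : ∀ m : Bool, ∑ i ∈ (bif m then A else Aᶜ), a i = b)
include hload

lemma isPrecedenceChain_partitionSchedule_inl :
    IsPrecedenceChain (fun i => partitionSchedule a b A (.inl i)) a := by
  intro i h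
  show partitionSchedule a b A (.inl _) + a _ ≤ partitionSchedule a b A (.inl _)
  have hend := partitionSchedule_add_procTime a b A (.inl ⟨i, Nat.lt_of_succ_lt h⟩)
  simp only [procTime, Sum.elim_inl, slotOf] at hend
  rw [hend, show 2 * i + 1 + 1 = 2 * (i + 1) by ring, machineTime_two_mul,
    partitionSchedule, slotOf, machineTime_two_mul_add_one]
  have h₁ := (prefixSum_le a _ (i + 1)).trans
    (hload (machineOf A (.inl ⟨i, Nat.lt_of_succ_lt h⟩))).le
  have h₂ : 2 * b * (i + 1 + 1) = 2 * b * (i + 1) + 2 * b := by ring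
  simp only at h₁ ⊢
  omega

lemma sup_partitionSchedule :
    univ.sup (fun j => partitionSchedule a b A j + procTime a b j) = (2 * t + 3) * b := by
  refine le_antisymm (Finset.sup_le fun j _ => ?_)
    (le_sup_of_le (mem_univ (.inr (.inl (Fin.last t)))) ?_)
  · rw [partitionSchedule_add_procTime, ← machineTime_two_mul_add_one_self a b (hload _)]
    exact machineTime_mono a b _ (by have := slotOf_le j; omega)
  · rw [partitionSchedule_add_procTime]
    exact (machineTime_two_mul_add_one_self a b (hload true)).ge

end PartitionSchedule

theorem partition_iff_three_chain_schedule_general (t : ℕ) (a : Fin t → ℕ)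
    (b : ℕ) (hb : ∑ i, a i = 2 * b) :
    (∃ A : Finset (Fin t), ∑ i ∈ A, a i = ∑ i ∈ Aᶜ, a i) ↔
      ∃ s : (Fin t ⊕ (Fin (t + 1) ⊕ Fin (t + 1))) → ℕ,
        -- processing times
        (let p : (Fin t ⊕ (Fin (t + 1) ⊕ Fin (t + 1))) → ℕ :=
            Sum.elim a (Sum.elim (fun _ => 2 * b) (fun _ => 2 * b))
        -- chain `J0`
        (∀ (i : ℕ) (h : i + 1 < t),
            s (Sum.inl ⟨i, Nat.lt_of_succ_lt h⟩) + a ⟨i, Nat.lt_of_succ_lt h⟩ ≤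
              s (Sum.inl ⟨i + 1, h⟩)) ∧
        -- chain `J1`
        (∀ (i : ℕ) (h : i + 1 < t + 1),
            s (Sum.inr (Sum.inl ⟨i, Nat.lt_of_succ_lt h⟩)) + 2 * b ≤
              s (Sum.inr (Sum.inl ⟨i + 1, h⟩))) ∧
        -- chain `J2`
        (∀ (i : ℕ) (h : i + 1 < t + 1),
            s (Sum.inr (Sum.inr ⟨i, Nat.lt_of_succ_lt h⟩)) + 2 * b ≤
              s (Sum.inr (Sum.inr ⟨i + 1, h⟩))) ∧
        -- at any time at most two jobs are being processed (two machines)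
        (∀ τ : ℕ,
            (Finset.univ.filter
              (fun j => s j ≤ τ ∧ τ < s j + p j)).card ≤ 2) ∧
        -- the makespan is `(2t+3)·b`
        Finset.univ.sup (fun j => s j + p j) = (2 * t + 3) * b) := by
  constructor
  · rintro ⟨A, hA⟩
    have hsum := sum_add_sum_compl A a
    have hload : ∀ m : Bool, ∑ i ∈ (bif m then A else Aᶜ), a i = b := by
      intro m; cases m <;> simp <;> omega
    exact ⟨partitionSchedule a b A, isPrecedenceChain_partitionSchedule_inl a b hload,
      isPrecedenceChain_machineTime a b A, isPrecedenceChain_machineTime a b Aᶜ,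
      card_running_partitionSchedule_le_two a b A, sup_partitionSchedule a b hload⟩
  · rintro ⟨s, h₀, h₁, h₂, hcap, hmk⟩
    exact exists_sum_eq_sum_compl_of_schedule h₀ h₁ h₂ hb hcap hmk

/-- Weak NP-hardness reduction correctness (Theorem 1): a multiset `a_1, …, a_t` of
positive integers with sum `2b` admits a partition into two parts of equal sums iff
the three-chain scheduling instance (chain `J0` of jobs with processing times `a_i`,
chains `J1`, `J2` each of `t+1` jobs of processing time `2b`) admits a non-preemptive
schedule on two identical machines with makespan `(2t+3)·b`. -/
theorem partition_iff_three_chain_schedule (t : ℕ) (a : Fin t → ℕ) (ha : ∀ i, 1 ≤ a i)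
    (b : ℕ) (hb : ∑ i, a i = 2 * b) :
    (∃ A : Finset (Fin t), ∑ i ∈ A, a i = ∑ i ∈ Aᶜ, a i) ↔
      ∃ s : (Fin t ⊕ (Fin (t + 1) ⊕ Fin (t + 1))) → ℕ,
        -- processing times
        (let p : (Fin t ⊕ (Fin (t + 1) ⊕ Fin (t + 1))) → ℕ :=
            Sum.elim a (Sum.elim (fun _ => 2 * b) (fun _ => 2 * b))
        -- chain `J0`
        (∀ (i : ℕ) (h : i + 1 < t),
            s (Sum.inl ⟨i, Nat.lt_of_succ_lt h⟩) + a ⟨i, Nat.lt_of_succ_lt h⟩ ≤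
              s (Sum.inl ⟨i + 1, h⟩)) ∧
        -- chain `J1`
        (∀ (i : ℕ) (h : i + 1 < t + 1),
            s (Sum.inr (Sum.inl ⟨i, Nat.lt_of_succ_lt h⟩)) + 2 * b ≤
              s (Sum.inr (Sum.inl ⟨i + 1, h⟩))) ∧
        -- chain `J2`
        (∀ (i : ℕ) (h : i + 1 < t + 1),
            s (Sum.inr (Sum.inr ⟨i, Nat.lt_of_succ_lt h⟩)) + 2 * b ≤
              s (Sum.inr (Sum.inr ⟨i + 1, h⟩))) ∧
        -- at any time at most two jobs are being processed (two machines)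
        (∀ τ : ℕ,
            (Finset.univ.filter
              (fun j => s j ≤ τ ∧ τ < s j + p j)).card ≤ 2) ∧
        -- the makespan is `(2t+3)·b`
        Finset.univ.sup (fun j => s j + p j) = (2 * t + 3) * b) :=
  partition_iff_three_chain_schedule_general t a b hb
end

section
/- In any schedule of the three-chain instance with makespan exactly (2t+3)b, each machine processes exactly t+1 of the 2(t+1) long jobs of length 2b, and the total processing time of short jobs assigned to each machine is exactly b. -/
/-!
The total work is `2 (2t+3) b`, twice the makespan, and the jobs of one machine occupy
disjoint subintervals of `[0, (2t+3) b)`; so each machine is busy all the time and its load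
is exactly `(2t+3) b`. A machine running `k` long jobs thus has `2bk ≤ (2t+3) b`, i.e.
`k ≤ t+1`; as the `2(t+1)` long jobs are shared by two machines, each runs exactly `t+1`
of them, and the remaining load `b` is short work.
-/

open Finset

lemma sum_le_of_nonoverlapping {J : Type*} (s p : J → ℕ) {T : ℕ} (F : Finset J)
    (hdisj : ∀ j ∈ F, ∀ j' ∈ F, j ≠ j' → s j + p j ≤ s j' ∨ s j' + p j' ≤ s j)
    (hfin : ∀ j ∈ F, s j + p j ≤ T) :
    ∑ j ∈ F, p j ≤ T := by
  have hIco : ∀ j ∈ F, ∀ j' ∈ F, j ≠ j' →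
      Disjoint (Ico (s j) (s j + p j)) (Ico (s j') (s j' + p j')) := by
    intro j hj j' hj' hne
    rw [disjoint_left]
    intro x hx hx'
    rw [mem_Ico] at hx hx'
    rcases hdisj j hj j' hj' hne with h | h <;> omega
  calc ∑ j ∈ F, p j = ∑ j ∈ F, #(Ico (s j) (s j + p j)) := by simp
    _ = #(F.biUnion fun j => Ico (s j) (s j + p j)) := (card_biUnion hIco).symm
    _ ≤ #(range T) := by
        refine card_le_card fun x hx => ?_
        obtain ⟨j, hj, hx⟩ := mem_biUnion.mp hx
        exact mem_range.mpr ((mem_Ico.mp hx).2.trans_le (hfin j hj))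
    _ = T := card_range T

lemma Fintype.eq_of_forall_le_of_sum_eq {ι M : Type*} [Fintype ι] [AddCommMonoid M]
    [PartialOrder M] [IsOrderedCancelAddMonoid M] {f : ι → M} {c : M}
    (hle : ∀ i, f i ≤ c) (hsum : ∑ i, f i = Fintype.card ι • c) (i : ι) : f i = c := by
  rw [← card_univ, ← sum_const] at hsum
  exact (sum_eq_sum_iff_of_le fun i _ => hle i).mp hsum i (mem_univ i)

lemma sum_filter_sum_type {α β M : Type*} [Fintype α] [Fintype β] [AddCommMonoid M]
    (P : α ⊕ β → Prop) [DecidablePred P] (f : α ⊕ β → M) :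
    ∑ j with P j, f j = ∑ i with P (.inl i), f (.inl i) + ∑ i with P (.inr i), f (.inr i) := by
  simp only [sum_filter, Fintype.sum_sum_type]

section Machines

variable {J K : Type*} [Fintype J] [DecidableEq K]
  (M : J → K) (s p : J → ℕ) {T : ℕ}

lemma machine_load_le
    (hmach : ∀ j j', j ≠ j' → M j = M j' → s j + p j ≤ s j' ∨ s j' + p j' ≤ s j)
    (hfin : ∀ j, s j + p j ≤ T) (m : K) :
    ∑ j with M j = m, p j ≤ T := by
  refine sum_le_of_nonoverlapping s p _ (fun j hj j' hj' hne => ?_) fun j _ => hfin j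
  rw [mem_filter] at hj hj'
  exact hmach j j' hne (hj.2.trans hj'.2.symm)

lemma machine_load_eq_of_sum_eq [Fintype K]
    (hmach : ∀ j j', j ≠ j' → M j = M j' → s j + p j ≤ s j' ∨ s j' + p j' ≤ s j)
    (hfin : ∀ j, s j + p j ≤ T) (htot : ∑ j, p j = Fintype.card K * T) (m : K) :
    ∑ j with M j = m, p j = T :=
  Fintype.eq_of_forall_le_of_sum_eq (machine_load_le M s p hmach hfin)
    (by rw [sum_fiberwise, htot, smul_eq_mul]) m

lemma load_sum_elim_const {α β γ : Type*} [Fintype α] [Fintype β] [Fintype γ]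
    (M : α ⊕ (β ⊕ γ) → K) (a : α → ℕ) (c : ℕ) (m : K) :
    ∑ j with M j = m, Sum.elim a (Sum.elim (fun _ => c) (fun _ => c)) j =
      ∑ i with M (.inl i) = m, a i +
        c * (#{i | M (.inr (.inl i)) = m} + #{i | M (.inr (.inr i)) = m}) := by
  simp only [sum_filter_sum_type, Sum.elim_inl, Sum.elim_inr, sum_const, smul_eq_mul]
  ring

lemma sum_card_fibers_add {β γ : Type*} [Fintype β] [Fintype γ] [Fintype K]
    (f : β → K) (g : γ → K) :
    ∑ m, (#{i | f i = m} + #{i | g i = m}) =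
      Fintype.card β + Fintype.card γ := by
  rw [sum_add_distrib, ← card_eq_sum_card_fiberwise (fun _ _ => mem_coe.mpr (mem_univ _)),
    ← card_eq_sum_card_fiberwise (fun _ _ => mem_coe.mpr (mem_univ _)), card_univ, card_univ]

end Machines

theorem three_chain_schedule_machine_loads_general (t b : ℕ) (hb : 1 ≤ b)
    (a : Fin t → ℕ) (hsum : ∑ i, a i = 2 * b)
    (M : (Fin t ⊕ (Fin (t + 1) ⊕ Fin (t + 1))) → Fin 2)
    (s : (Fin t ⊕ (Fin (t + 1) ⊕ Fin (t + 1))) → ℕ)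
    (p : (Fin t ⊕ (Fin (t + 1) ⊕ Fin (t + 1))) → ℕ)
    (hp : p = Sum.elim a (Sum.elim (fun _ => 2 * b) (fun _ => 2 * b)))
    -- each machine processes at most one job at a time
    (hmach : ∀ j j', j ≠ j' → M j = M j' → s j + p j ≤ s j' ∨ s j' + p j' ≤ s j)
    -- the makespan is exactly `(2t+3)·b`
    (hmak : Finset.univ.sup (fun j => s j + p j) = (2 * t + 3) * b) :
    ∀ m : Fin 2,
      ((Finset.univ.filter (fun i : Fin (t + 1) => M (Sum.inr (Sum.inl i)) = m)).card +
        (Finset.univ.filter (fun i : Fin (t + 1) => M (Sum.inr (Sum.inr i)) = m)).card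
          = t + 1) ∧
      ∑ i ∈ Finset.univ.filter (fun i : Fin t => M (Sum.inl i) = m), a i = b := by
  have hfin : ∀ j, s j + p j ≤ (2 * t + 3) * b := fun j =>
    hmak ▸ le_sup (f := fun j => s j + p j) (mem_univ j)
  have htot : ∑ j, p j = Fintype.card (Fin 2) * ((2 * t + 3) * b) := by
    simp only [hp, Fintype.sum_sum_type, Sum.elim_inl, Sum.elim_inr, hsum, sum_const,
      card_univ, Fintype.card_fin, smul_eq_mul]
    ring
  have hload (m : Fin 2) : ∑ i with M (.inl i) = m, a i +
      2 * b * (#{i | M (.inr (.inl i)) = m} + #{i | M (.inr (.inr i)) = m}) =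
        (2 * t + 3) * b := by
    rw [← load_sum_elim_const, ← hp]
    exact machine_load_eq_of_sum_eq M s p hmach hfin htot m
  have hlong_le (m : Fin 2) :
      #{i | M (.inr (.inl i)) = m} + #{i | M (.inr (.inr i)) = m} ≤ t + 1 := by
    have h := le_add_self.trans (hload m).le
    rw [show (2 * t + 3) * b = 2 * b * (t + 1) + b by ring] at h
    nlinarith
  have hlong := Fintype.eq_of_forall_le_of_sum_eq hlong_le
    ((sum_card_fibers_add _ _).trans (by simp only [Fintype.card_fin, smul_eq_mul]; ring))
  intro m
  refine ⟨hlong m, ?_⟩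
  have h := hload m
  rw [hlong m] at h
  linarith

/-- In any two-machine schedule of the three-chain instance with makespan exactly
`(2t+3)·b`, each machine processes exactly `t+1` of the `2(t+1)` long jobs of length
`2b`, and the total processing time of the short jobs assigned to each machine is
exactly `b`. -/
theorem three_chain_schedule_machine_loads (t b : ℕ) (hb : 1 ≤ b)
    (a : Fin t → ℕ) (ha : ∀ i, 1 ≤ a i ∧ a i ≤ b) (hsum : ∑ i, a i = 2 * b)
    (M : (Fin t ⊕ (Fin (t + 1) ⊕ Fin (t + 1))) → Fin 2)
    (s : (Fin t ⊕ (Fin (t + 1) ⊕ Fin (t + 1))) → ℕ)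
    (p : (Fin t ⊕ (Fin (t + 1) ⊕ Fin (t + 1))) → ℕ)
    (hp : p = Sum.elim a (Sum.elim (fun _ => 2 * b) (fun _ => 2 * b)))
    -- chain `J0` is processed in order
    (hchain0 : ∀ (i : ℕ) (h : i + 1 < t),
        s (Sum.inl ⟨i, Nat.lt_of_succ_lt h⟩) + a ⟨i, Nat.lt_of_succ_lt h⟩ ≤
          s (Sum.inl ⟨i + 1, h⟩))
    -- chain `J1` is processed in order
    (hchain1 : ∀ (i : ℕ) (h : i + 1 < t + 1),
        s (Sum.inr (Sum.inl ⟨i, Nat.lt_of_succ_lt h⟩)) + 2 * b ≤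
          s (Sum.inr (Sum.inl ⟨i + 1, h⟩)))
    -- chain `J2` is processed in order
    (hchain2 : ∀ (i : ℕ) (h : i + 1 < t + 1),
        s (Sum.inr (Sum.inr ⟨i, Nat.lt_of_succ_lt h⟩)) + 2 * b ≤
          s (Sum.inr (Sum.inr ⟨i + 1, h⟩)))
    -- each machine processes at most one job at a time
    (hmach : ∀ j j', j ≠ j' → M j = M j' → s j + p j ≤ s j' ∨ s j' + p j' ≤ s j)
    -- the makespan is exactly `(2t+3)·b`
    (hmak : Finset.univ.sup (fun j => s j + p j) = (2 * t + 3) * b) :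
    ∀ m : Fin 2,
      ((Finset.univ.filter (fun i : Fin (t + 1) => M (Sum.inr (Sum.inl i)) = m)).card +
        (Finset.univ.filter (fun i : Fin (t + 1) => M (Sum.inr (Sum.inr i)) = m)).card
          = t + 1) ∧
      ∑ i ∈ Finset.univ.filter (fun i : Fin t => M (Sum.inl i) = m), a i = b :=
  three_chain_schedule_machine_loads_general t b hb a hsum M s p hp hmach hmak
end

section
/- Let t ∈ s1 ⧢ ⋯ ⧢ sk be words over a binary alphabet where t has the same multiset of letters as the concatenation of s1,...,sk. For each i, define y_i(x) as the position of the block of t into which the last letter of the x-th block of s_i is mapped, and δ_i(x) = y_i(x) - x. Then each δ_i is non-decreasing, δ_i(x) ≥ 0 for all x, and δ_i(x) ≤ B_t - B_i where B_t is the number of blocks of t and B_i the number of blocks of s_i... in particular if all s_i have B blocks and t has B + c blocks, then 0 ≤ δ_i(x) ≤ c for all x. -/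
/-- `blockIdx w p` is the index (counted from `1`) of the maximal block of equal
letters of `w` containing position `p` (positions counted from `0`). -/
def blockIdx {α : Type*} [DecidableEq α] (w : List α) (p : ℕ) : ℕ :=
  1 + ((List.range p).filter (fun j => decide (w[j]? ≠ w[j + 1]?))).length

/-- `numBlocks w` is the number of maximal blocks of equal letters of `w`. -/
def numBlocks {α : Type*} [DecidableEq α] (w : List α) : ℕ :=
  if w = [] then 0 else blockIdx w (w.length - 1)

/-- `lastPos w x` is the position (counted from `0`) of the last letter of the
`x`-th block of `w`. -/
def lastPos {α : Type*} [DecidableEq α] (w : List α) (x : ℕ) : ℕ :=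
  ((Finset.range w.length).filter (fun p => blockIdx w p = x)).sup id

/-! Along a strictly increasing letter-preserving embedding `g` of a word `s` into `t`, every
change of letter between positions `q` and `q + 1` of `s` is also a change of letter between
`g q` and `g (q + 1)` in `t`, so block indices of `t` grow at least as fast as those of `s`:
`blockIdx s q - blockIdx s p ≤ blockIdx t (g q) - blockIdx t (g p)` for `p ≤ q`.
Comparing the last letter of block `x` of `s` with the first letter of `s`, with the last letter
of `s`, and with the last letter of a later block `x'` gives `0 ≤ δ x`, `δ x ≤ B_t - B_s` and
`δ x ≤ δ x'` respectively. -/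

section Blocks

variable {α : Type*} [DecidableEq α]

lemma blockIdx_zero (w : List α) : blockIdx w 0 = 1 := by
  simp [blockIdx]

lemma one_le_blockIdx (w : List α) (p : ℕ) : 1 ≤ blockIdx w p :=
  Nat.le_add_right 1 _

lemma blockIdx_succ (w : List α) (p : ℕ) :
    blockIdx w (p + 1) = blockIdx w p + if w[p]? = w[p + 1]? then 0 else 1 := by
  unfold blockIdx
  rw [List.range_succ, List.filter_append, List.length_append, List.filter_singleton]
  split_ifs with h
  · simp [h]
  · simp [h, Nat.add_assoc]

lemma blockIdx_mono (w : List α) : Monotone (blockIdx w) := fun _ _ hpq =>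
  Nat.add_le_add_left ((List.range_sublist.mpr hpq).filter _).length_le 1

lemma blockIdx_lt_of_getElem?_ne {w : List α} {p q : ℕ} (hpq : p ≤ q) (hne : w[p]? ≠ w[q]?) :
    blockIdx w p < blockIdx w q := by
  induction q, hpq using Nat.le_induction with
  | base => exact absurd rfl hne
  | succ q hpq ih =>
    rw [blockIdx_succ]
    by_cases hpq' : w[p]? = w[q]?
    · have hq : w[q]? ≠ w[q + 1]? := hpq' ▸ hne
      have := blockIdx_mono w hpq
      simp only [hq, if_false]
      omega
    · have := ih hpq'
      split_ifs <;> omega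

lemma exists_le_blockIdx_eq {w : List α} {m x : ℕ} (hx1 : 1 ≤ x) (hx : x ≤ blockIdx w m) :
    ∃ p ≤ m, blockIdx w p = x := by
  induction m with
  | zero => exact ⟨0, le_rfl, by rw [blockIdx_zero] at hx ⊢; omega⟩
  | succ m ih =>
    rcases le_or_gt x (blockIdx w m) with hxm | hxm
    · obtain ⟨p, hp, hpx⟩ := ih hxm
      exact ⟨p, hp.trans m.le_succ, hpx⟩
    · refine ⟨m + 1, le_rfl, ?_⟩
      rw [blockIdx_succ] at hx ⊢
      split_ifs at hx ⊢ <;> omega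

lemma numBlocks_of_ne_nil {w : List α} (hw : w ≠ []) :
    numBlocks w = blockIdx w (w.length - 1) :=
  if_neg hw

lemma blockIdx_le_numBlocks {w : List α} {p : ℕ} (hp : p < w.length) :
    blockIdx w p ≤ numBlocks w := by
  rw [numBlocks_of_ne_nil (List.ne_nil_of_length_pos (by omega))]
  exact blockIdx_mono w (by omega)

lemma exists_blockIdx_eq {w : List α} {x : ℕ} (hx1 : 1 ≤ x) (hx : x ≤ numBlocks w) :
    ∃ p < w.length, blockIdx w p = x := by
  have hw : w ≠ [] := by
    rintro rfl
    rw [numBlocks, if_pos rfl] at hx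
    omega
  rw [numBlocks_of_ne_nil hw] at hx
  obtain ⟨p, hp, hpx⟩ := exists_le_blockIdx_eq hx1 hx
  exact ⟨p, by have := List.length_pos_iff.mpr hw; omega, hpx⟩

lemma lastPos_mem {w : List α} {x : ℕ} (hx1 : 1 ≤ x) (hx : x ≤ numBlocks w) :
    lastPos w x ∈ (Finset.range w.length).filter (fun p => blockIdx w p = x) := by
  obtain ⟨p, hp, hpx⟩ := exists_blockIdx_eq hx1 hx
  have hne : ((Finset.range w.length).filter (fun p => blockIdx w p = x)).Nonempty :=
    ⟨p, Finset.mem_filter.mpr ⟨Finset.mem_range.mpr hp, hpx⟩⟩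
  obtain ⟨q, hq, hsup⟩ := Finset.exists_mem_eq_sup _ hne id
  rwa [lastPos, hsup]

lemma lastPos_lt_length {w : List α} {x : ℕ} (hx1 : 1 ≤ x) (hx : x ≤ numBlocks w) :
    lastPos w x < w.length :=
  Finset.mem_range.mp (Finset.mem_filter.mp (lastPos_mem hx1 hx)).1

lemma blockIdx_lastPos {w : List α} {x : ℕ} (hx1 : 1 ≤ x) (hx : x ≤ numBlocks w) :
    blockIdx w (lastPos w x) = x :=
  (Finset.mem_filter.mp (lastPos_mem hx1 hx)).2

lemma lastPos_le_lastPos {w : List α} {x x' : ℕ} (hx1 : 1 ≤ x) (hxx' : x ≤ x')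
    (hx' : x' ≤ numBlocks w) : lastPos w x ≤ lastPos w x' := by
  rcases hxx'.eq_or_lt with rfl | hlt
  · exact le_rfl
  · refine ((blockIdx_mono w).reflect_lt ?_).le
    rwa [blockIdx_lastPos hx1 (by omega), blockIdx_lastPos (by omega) hx']

end Blocks

structure IsLetterEmbedding {α : Type*} (s t : List α) (g : ℕ → ℕ) : Prop where
  strictMonoOn : StrictMonoOn g (Set.Iio s.length)
  getElem?_eq : ∀ p < s.length, t[g p]? = s[p]?

namespace IsLetterEmbedding

variable {α : Type*} {s t : List α} {g : ℕ → ℕ}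

lemma lt_length (h : IsLetterEmbedding s t g) {p : ℕ} (hp : p < s.length) :
    g p < t.length := by
  have hget := h.getElem?_eq p hp
  rw [List.getElem?_eq_getElem hp] at hget
  exact (List.getElem?_eq_some_iff.mp hget).1

variable [DecidableEq α]

lemma blockIdx_add_le (h : IsLetterEmbedding s t g) {p q : ℕ} (hpq : p ≤ q)
    (hq : q < s.length) :
    blockIdx s q + blockIdx t (g p) ≤ blockIdx t (g q) + blockIdx s p := by
  induction q, hpq using Nat.le_induction with
  | base => exact le_of_eq (Nat.add_comm _ _)
  | succ q hpq ih =>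
    have ih := ih (by omega)
    have hg : g q < g (q + 1) :=
      h.strictMonoOn (Set.mem_Iio.mpr (by omega)) (Set.mem_Iio.mpr hq) q.lt_succ_self
    rw [blockIdx_succ]
    split_ifs with hs
    · have := blockIdx_mono t hg.le
      omega
    · have ht : t[g q]? ≠ t[g (q + 1)]? := by
        rwa [h.getElem?_eq q (by omega), h.getElem?_eq (q + 1) hq]
      have := blockIdx_lt_of_getElem?_ne hg.le ht
      omega

lemma le_blockIdx_lastPos (h : IsLetterEmbedding s t g) {x : ℕ} (hx1 : 1 ≤ x)
    (hx : x ≤ numBlocks s) : x ≤ blockIdx t (g (lastPos s x)) := by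
  have := h.blockIdx_add_le (Nat.zero_le _) (lastPos_lt_length hx1 hx)
  rw [blockIdx_lastPos hx1 hx, blockIdx_zero] at this
  have := one_le_blockIdx t (g 0)
  omega

lemma blockIdx_lastPos_add_numBlocks_le (h : IsLetterEmbedding s t g) {x : ℕ} (hx1 : 1 ≤ x)
    (hx : x ≤ numBlocks s) : blockIdx t (g (lastPos s x)) + numBlocks s ≤ numBlocks t + x := by
  have hlast := lastPos_lt_length hx1 hx
  have hend : s.length - 1 < s.length := by omega
  have := h.blockIdx_add_le (Nat.le_sub_one_of_lt hlast) hend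
  rw [blockIdx_lastPos hx1 hx, ← numBlocks_of_ne_nil (List.ne_nil_of_length_pos (by omega))]
    at this
  have := blockIdx_le_numBlocks (h.lt_length hend)
  omega

lemma blockIdx_lastPos_add_le (h : IsLetterEmbedding s t g) {x x' : ℕ} (hx1 : 1 ≤ x)
    (hxx' : x ≤ x') (hx' : x' ≤ numBlocks s) :
    blockIdx t (g (lastPos s x)) + x' ≤ blockIdx t (g (lastPos s x')) + x := by
  have := h.blockIdx_add_le (lastPos_le_lastPos hx1 hxx' hx') (lastPos_lt_length (by omega) hx')
  rwa [blockIdx_lastPos hx1 (by omega), blockIdx_lastPos (by omega) hx', Nat.add_comm x'] at this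

end IsLetterEmbedding

theorem shuffle_block_shift_general (k B c : ℕ)
    (s : Fin k → List Bool) (t : List Bool) (f : Fin k → ℕ → ℕ)
    (hmono : ∀ i, StrictMonoOn (f i) (Set.Iio (s i).length))
    (hletter : ∀ i p, p < (s i).length → t[f i p]? = (s i)[p]?)
    (hBs : ∀ i, numBlocks (s i) = B) (hBt : numBlocks t = B + c) :
    ∀ i : Fin k, ∀ x, 1 ≤ x → x ≤ B →
      (x : ℤ) ≤ (blockIdx t (f i (lastPos (s i) x)) : ℤ) ∧
      (blockIdx t (f i (lastPos (s i) x)) : ℤ) - x ≤ c ∧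
      ∀ x', x ≤ x' → x' ≤ B →
        (blockIdx t (f i (lastPos (s i) x)) : ℤ) - x ≤
          (blockIdx t (f i (lastPos (s i) x')) : ℤ) - x' := by
  intro i x hx1 hxB
  have h : IsLetterEmbedding (s i) t (f i) := ⟨hmono i, hletter i⟩
  rw [← hBs i] at hxB
  have lower := h.le_blockIdx_lastPos hx1 hxB
  have upper := h.blockIdx_lastPos_add_numBlocks_le hx1 hxB
  rw [hBs i, hBt] at upper
  refine ⟨by omega, by omega, fun x' hxx' hx'B => ?_⟩
  have := h.blockIdx_lastPos_add_le hx1 hxx' (hBs i ▸ hx'B)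
  omega

/-- Let `t ∈ s_1 ⧢ ⋯ ⧢ s_k` over a binary alphabet, witnessed by strictly
increasing letter-preserving position maps `f i` with pairwise disjoint images
covering `t`.  Suppose each `s i` has `B` blocks and `t` has `B + c` blocks.
For the `x`-th block of `s i`, let `y i x` be the index of the block of `t`
receiving its last letter and `δ i x = y i x - x`.  Then each `δ i` is
non-decreasing and `0 ≤ δ i x ≤ c`. -/
theorem shuffle_block_shift (k B c : ℕ) (hB : 1 ≤ B)
    (s : Fin k → List Bool) (t : List Bool) (f : Fin k → ℕ → ℕ)
    (hmono : ∀ i, StrictMonoOn (f i) (Set.Iio (s i).length))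
    (hrange : ∀ i p, p < (s i).length → f i p < t.length)
    (hletter : ∀ i p, p < (s i).length → t[f i p]? = (s i)[p]?)
    (hdisj : ∀ i j p q, p < (s i).length → q < (s j).length →
      f i p = f j q → i = j ∧ p = q)
    (hcover : ∀ r < t.length, ∃ i p, p < (s i).length ∧ f i p = r)
    (hBs : ∀ i, numBlocks (s i) = B) (hBt : numBlocks t = B + c) :
    ∀ i : Fin k, ∀ x, 1 ≤ x → x ≤ B →
      (x : ℤ) ≤ (blockIdx t (f i (lastPos (s i) x)) : ℤ) ∧
      (blockIdx t (f i (lastPos (s i) x)) : ℤ) - x ≤ c ∧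
      ∀ x', x ≤ x' → x' ≤ B →
        (blockIdx t (f i (lastPos (s i) x)) : ℤ) - x ≤
          (blockIdx t (f i (lastPos (s i) x')) : ℤ) - x' :=
  shuffle_block_shift_general k B c s t f hmono hletter hBs hBt
end

section
/- Consider jobs scheduled on two machines with makespan T = Σ_{x=1}^{|t|}(t[x]+1), where for each x ∈ [1,|t|] there are three floor jobs z_{x,1}, z_{x,2}, z_{x,3} with z_{x,1} ≺ z_{x,2}, z_{x,1} ≺ z_{x,3}, z_{x,2} ≺ z_{x+1,1}, z_{x,3} ≺ z_{x+1,1} (when x < |t|), processing times p(z_{x,1}) = t[x] ∈ {1,2} and p(z_{x,2}) = p(z_{x,3}) = 1. Then in any feasible two-machine schedule with makespan T, job z_{x,1} starts at time τ(x) := Σ_{y=1}^{x-1}(t[y]+1), and jobs z_{x,2}, z_{x,3} both start at time τ(x) + t[x]. -/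
/-!
Chaining the precedences `z_{x,1} ≺ z_{x,2} ≺ z_{x+1,1}` shows that consecutive floors start at
least `t[x] + 1` apart, and the last floor job must still finish by the makespan `T`, which is
exactly the sum of these gaps. So the chain of floor starts has no slack at all: every floor
starts at `τ(x)`, and `z_{x,2}`, `z_{x,3}`, squeezed between `τ(x) + t[x]` and `τ(x+1) - 1`,
start at `τ(x) + t[x]`.
-/

open Finset

theorem eq_sum_range_of_add_le_succ {m : ℕ} {a d : ℕ → ℕ}
    (hstep : ∀ x < m, a x + d x ≤ a (x + 1)) (hend : a m ≤ ∑ y ∈ range m, d y)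
    {x : ℕ} (hx : x ≤ m) : a x = ∑ y ∈ range x, d y := by
  -- the slack `a x - ∑_{y<x} d y` is monotone on `[0, m]`, nonnegative at `0` and `≤ 0` at `m`
  set slack : ℕ → ℤ := fun x => (a x : ℤ) - ((∑ y ∈ range x, d y : ℕ) : ℤ)
  have hmono : MonotoneOn slack (Set.Iic m) :=
    monotoneOn_of_le_add_one Set.ordConnected_Iic fun y _ _ hy => by
      have := hstep y hy
      simp only [slack, sum_range_succ, Nat.cast_add]
      omega
  have hlow : slack 0 ≤ slack x := hmono (Nat.zero_le m) hx (Nat.zero_le x)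
  have hhigh : slack x ≤ slack m := hmono hx (Set.mem_Iic.2 le_rfl) hx
  simp only [slack, range_zero, sum_empty] at hlow hhigh
  omega

theorem floor_jobs_start_times_general (m : ℕ)
    (t : ℕ → ℕ)
    (p : ℕ → ℕ → ℕ) (hp : ∀ x < m, p x 0 = t x ∧ p x 1 = 1 ∧ p x 2 = 1)
    (s : ℕ → ℕ → ℕ)
    -- precedence constraints `z_{x,1} ≺ z_{x,2}` and `z_{x,1} ≺ z_{x,3}`
    (hprec1 : ∀ x < m, s x 0 + t x ≤ s x 1 ∧ s x 0 + t x ≤ s x 2)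
    -- precedence constraints `z_{x,2} ≺ z_{x+1,1}` and `z_{x,3} ≺ z_{x+1,1}`
    (hprec2 : ∀ x, x + 1 < m → s x 1 + 1 ≤ s (x + 1) 0 ∧ s x 2 + 1 ≤ s (x + 1) 0)
    -- the makespan is `T`
    (hmak : (Finset.range m ×ˢ Finset.range 3).sup (fun j => s j.1 j.2 + p j.1 j.2)
        = ∑ y ∈ Finset.range m, (t y + 1)) :
    ∀ x < m, s x 0 = ∑ y ∈ Finset.range x, (t y + 1) ∧
      s x 1 = (∑ y ∈ Finset.range x, (t y + 1)) + t x ∧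
      s x 2 = (∑ y ∈ Finset.range x, (t y + 1)) + t x := by
  set T := ∑ y ∈ range m, (t y + 1)
  have hfinish : ∀ x < m, ∀ j < 3, s x j + p x j ≤ T := fun x hx j hj =>
    hmak ▸ le_sup (f := fun j : ℕ × ℕ => s j.1 j.2 + p j.1 j.2) (b := (x, j)) (by simp [hx, hj])
  -- an imaginary floor `m` starting at the makespan closes the chain
  set floor : ℕ → ℕ := fun x => if x < m then s x 0 else T
  have hnext : ∀ x < m, s x 1 + 1 ≤ floor (x + 1) ∧ s x 2 + 1 ≤ floor (x + 1) := by
    intro x hx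
    by_cases hlast : x + 1 < m
    · simpa [floor, hlast] using hprec2 x hlast
    · have := hp x hx
      have := hfinish x hx 1 (by norm_num)
      have := hfinish x hx 2 (by norm_num)
      simp only [floor, hlast, if_false]
      omega
  have hstep : ∀ x < m, floor x + (t x + 1) ≤ floor (x + 1) := fun x hx => by
    have := (hnext x hx).1
    have := (hprec1 x hx).1
    have : floor x = s x 0 := if_pos hx
    omega
  have hfloor : ∀ x ≤ m, floor x = ∑ y ∈ range x, (t y + 1) :=
    fun x => eq_sum_range_of_add_le_succ hstep (le_of_eq (if_neg (lt_irrefl m)))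
  intro x hx
  have hcur : s x 0 = ∑ y ∈ range x, (t y + 1) := by simpa [floor, hx] using hfloor x hx.le
  have hsucc : floor (x + 1) = s x 0 + (t x + 1) := by rw [hfloor (x + 1) hx, sum_range_succ, hcur]
  obtain ⟨hz2_next, hz3_next⟩ := hnext x hx
  obtain ⟨hz2_prev, hz3_prev⟩ := hprec1 x hx
  omega

/-- In any feasible two-machine schedule of the floor jobs with makespan
`T = Σ_{x<m}(t[x]+1)`, the job `z_{x,1}` starts at time `τ(x) = Σ_{y<x}(t[y]+1)` and
the jobs `z_{x,2}`, `z_{x,3}` both start at time `τ(x) + t[x]`.  Floor job `x j`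
(with `x < m`, `j < 3`) is `z_{x+1, j+1}` of the paper. -/
theorem floor_jobs_start_times (m : ℕ) (hm : 1 ≤ m)
    (t : ℕ → ℕ) (ht : ∀ x < m, t x = 1 ∨ t x = 2)
    (p : ℕ → ℕ → ℕ) (hp : ∀ x < m, p x 0 = t x ∧ p x 1 = 1 ∧ p x 2 = 1)
    (s : ℕ → ℕ → ℕ)
    -- precedence constraints `z_{x,1} ≺ z_{x,2}` and `z_{x,1} ≺ z_{x,3}`
    (hprec1 : ∀ x < m, s x 0 + t x ≤ s x 1 ∧ s x 0 + t x ≤ s x 2)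
    -- precedence constraints `z_{x,2} ≺ z_{x+1,1}` and `z_{x,3} ≺ z_{x+1,1}`
    (hprec2 : ∀ x, x + 1 < m → s x 1 + 1 ≤ s (x + 1) 0 ∧ s x 2 + 1 ≤ s (x + 1) 0)
    -- at any time at most two jobs are running (two machines)
    (hconc : ∀ τ : ℕ,
      ((Finset.range m ×ˢ Finset.range 3).filter
        (fun j => s j.1 j.2 ≤ τ ∧ τ < s j.1 j.2 + p j.1 j.2)).card ≤ 2)
    -- the makespan is `T`
    (hmak : (Finset.range m ×ˢ Finset.range 3).sup (fun j => s j.1 j.2 + p j.1 j.2)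
        = ∑ y ∈ Finset.range m, (t y + 1)) :
    ∀ x < m, s x 0 = ∑ y ∈ Finset.range x, (t y + 1) ∧
      s x 1 = (∑ y ∈ Finset.range x, (t y + 1)) + t x ∧
      s x 2 = (∑ y ∈ Finset.range x, (t y + 1)) + t x :=
  floor_jobs_start_times_general m t p hp s hprec1 hprec2 hmak
end

section
/- The jobs created by the floor-job construction decompose into exactly two chains under the precedence relation, namely {z_{x,1}, z_{x,2} : 1 ≤ x ≤ n} and {z_{x,1}, z_{x,3} : 1 ≤ x ≤ n}; hence the width of the precedence partial order on all floor jobs is 2 (for n ≥ 1). -/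
/-!
The jobs `z_{x,1}, z_{x,2}` lie on one path `z_{1,1} ≺ z_{1,2} ≺ z_{2,1} ≺ …`, and so do
the jobs `z_{x,1}, z_{x,3}`: any job precedes every job on a higher floor, and `z_{x,1}` precedes
both other jobs of its floor. Two chains cover the poset, so an antichain has at most two
elements. Conversely the rank `3x + [j ≠ 1]` strictly increases along every generating
precedence, so `z_{1,2}` and `z_{1,3}`, which have the same rank, are incomparable.
-/

/-- The generating precedences among floor jobs `(x, j)` with `x < n`, `j < 3`
(`(x,0)` is `z_{x+1,1}`, `(x,1)` is `z_{x+1,2}`, `(x,2)` is `z_{x+1,3}`):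
`z_{x,1} ≺ z_{x,2}`, `z_{x,1} ≺ z_{x,3}`, and for `x < n`,
`z_{x,2} ≺ z_{x+1,1}` and `z_{x,3} ≺ z_{x+1,1}`. -/
def floorGen (n : ℕ) : (ℕ × Fin 3) → (ℕ × Fin 3) → Prop := fun a b =>
  (a.1 = b.1 ∧ b.1 < n ∧ a.2 = 0 ∧ (b.2 = 1 ∨ b.2 = 2)) ∨
  (a.1 + 1 = b.1 ∧ b.1 < n ∧ (a.2 = 1 ∨ a.2 = 2) ∧ b.2 = 0)

open Relation

lemma IsAntichain.card_le_of_subset_biUnion_isChain {α ι : Type*}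
    {r : α → α → Prop} {S : Finset α} (hS : IsAntichain r (S : Set α)) (t : Finset ι)
    (C : ι → Set α) (hC : ∀ i ∈ t, IsChain r (C i)) (hcover : (S : Set α) ⊆ ⋃ i ∈ t, C i) :
    S.card ≤ t.card := by
  classical
  have hsub : S ⊆ t.biUnion fun i => S.filter (· ∈ C i) := by
    intro a ha
    obtain ⟨i, hi, hai⟩ := Set.mem_iUnion₂.1 (hcover ha)
    exact Finset.mem_biUnion.2 ⟨i, hi, Finset.mem_filter.2 ⟨ha, hai⟩⟩
  have hpiece : ∀ i ∈ t, (S.filter (· ∈ C i)).card ≤ 1 := fun i hi =>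
    Finset.card_le_one.2 fun a ha b hb => by
      rw [Finset.mem_filter] at ha hb
      exact inter_subsingleton_of_isAntichain_of_isChain hS (hC i hi) ⟨ha.1, ha.2⟩ ⟨hb.1, hb.2⟩
  calc S.card ≤ (t.biUnion fun i => S.filter (· ∈ C i)).card := Finset.card_le_card hsub
    _ ≤ t.card * 1 := Finset.card_biUnion_le_card_mul _ _ _ hpiece
    _ = t.card := mul_one _

lemma Relation.ReflTransGen.lt_of_ne {α β : Type*} [Preorder β] {r : α → α → Prop}
    {f : α → β} (hf : ∀ a b, r a b → f a < f b) {a b : α} (h : ReflTransGen r a b)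
    (hne : a ≠ b) : f a < f b := by
  rcases reflTransGen_iff_eq_or_transGen.1 h with rfl | h
  · exact absurd rfl hne
  · simpa only [transGen_eq_self] using TransGen.lift f hf _ _ h

namespace FloorJobs

def rank (a : ℕ × Fin 3) : ℕ := 3 * a.1 + if a.2 = 0 then 0 else 1

lemma rank_lt_of_floorGen {n : ℕ} {a b : ℕ × Fin 3} (h : floorGen n a b) :
    rank a < rank b := by
  unfold rank
  obtain ⟨_, -, _, _⟩ | ⟨_, -, _, _⟩ := h <;> split_ifs <;> omega

lemma not_reflTransGen_of_rank_eq {n : ℕ} {a b : ℕ × Fin 3} (hne : a ≠ b)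
    (hrank : rank a = rank b) : ¬ ReflTransGen (floorGen n) a b := fun h =>
  (h.lt_of_ne (f := rank) (fun _ _ => rank_lt_of_floorGen) hne).ne hrank

lemma reflTransGen_zero_of_le {n x : ℕ} {b : ℕ × Fin 3} (hx : x ≤ b.1) (hb : b.1 < n) :
    ReflTransGen (floorGen n) (x, 0) b := by
  have hbase : ∀ y, x ≤ y → y < n → ReflTransGen (floorGen n) (x, 0) (y, 0) := by
    intro y hxy
    induction y, hxy using Nat.le_induction with
    | base => exact fun _ => .refl
    | succ y _ ih =>
      intro hy
      refine ((ih (by omega)).tail (c := (y, 1)) ?_).tail ?_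
      · exact Or.inl ⟨rfl, by omega, rfl, Or.inl rfl⟩
      · exact Or.inr ⟨rfl, hy, Or.inl rfl, rfl⟩
  refine (hbase b.1 hx hb).trans ?_
  by_cases hb0 : b.2 = 0
  · rw [show b = (b.1, 0) from Prod.ext rfl hb0]
  · exact .single (Or.inl ⟨rfl, hb, rfl, by omega⟩)

lemma reflTransGen_of_fst_lt {n : ℕ} {a b : ℕ × Fin 3} (hab : a.1 < b.1) (hb : b.1 < n) :
    ReflTransGen (floorGen n) a b := by
  have hnext : ReflTransGen (floorGen n) a (a.1 + 1, 0) := by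
    by_cases ha0 : a.2 = 0
    · rw [show a = (a.1, 0) from Prod.ext rfl ha0]
      exact (ReflTransGen.single (b := (a.1, 1)) (Or.inl ⟨rfl, by omega, rfl, Or.inl rfl⟩)).tail
        (Or.inr ⟨rfl, by omega, Or.inl rfl, rfl⟩)
    · exact .single (Or.inr ⟨rfl, by omega, by omega, rfl⟩)
  exact hnext.trans (reflTransGen_zero_of_le hab hb)

lemma comparable_of_snd_eq_zero_or {n : ℕ} (j : Fin 3) {a b : ℕ × Fin 3} (ha : a.1 < n)
    (hb : b.1 < n) (ha' : a.2 = 0 ∨ a.2 = j) (hb' : b.2 = 0 ∨ b.2 = j) :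
    ReflTransGen (floorGen n) a b ∨ ReflTransGen (floorGen n) b a := by
  rcases lt_trichotomy a.1 b.1 with hlt | heq | hgt
  · exact .inl (reflTransGen_of_fst_lt hlt hb)
  · rcases ha' with ha0 | haj
    · rw [show a = (b.1, 0) from Prod.ext heq ha0]
      exact .inl (reflTransGen_zero_of_le le_rfl hb)
    rcases hb' with hb0 | hbj
    · rw [show b = (a.1, 0) from Prod.ext heq.symm hb0]
      exact .inr (reflTransGen_zero_of_le le_rfl ha)
    · exact .inl (by rw [Prod.ext heq (haj.trans hbj.symm)])
  · exact .inr (reflTransGen_of_fst_lt hgt ha)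

end FloorJobs

open FloorJobs in
/-- The floor jobs decompose into exactly two chains under the precedence relation
(the reflexive-transitive closure of `floorGen`), namely
`{z_{x,1}, z_{x,2}}` and `{z_{x,1}, z_{x,3}}`; hence the width of the precedence
partial order is `2` when `n ≥ 1`. -/
theorem floor_jobs_width_two (n : ℕ) (hn : 1 ≤ n) :
    -- the first set is a chain
    (∀ a b : ℕ × Fin 3, a.1 < n → b.1 < n → (a.2 = 0 ∨ a.2 = 1) → (b.2 = 0 ∨ b.2 = 1) →
      Relation.ReflTransGen (floorGen n) a b ∨ Relation.ReflTransGen (floorGen n) b a) ∧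
    -- the second set is a chain
    (∀ a b : ℕ × Fin 3, a.1 < n → b.1 < n → (a.2 = 0 ∨ a.2 = 2) → (b.2 = 0 ∨ b.2 = 2) →
      Relation.ReflTransGen (floorGen n) a b ∨ Relation.ReflTransGen (floorGen n) b a) ∧
    -- the two chains cover all floor jobs
    (∀ a : ℕ × Fin 3, a.1 < n → (a.2 = 0 ∨ a.2 = 1) ∨ (a.2 = 0 ∨ a.2 = 2)) ∧
    -- every antichain has size at most 2
    (∀ S : Finset (ℕ × Fin 3), (∀ a ∈ S, a.1 < n) →
      (∀ a ∈ S, ∀ b ∈ S, a ≠ b →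
        ¬ Relation.ReflTransGen (floorGen n) a b ∧
        ¬ Relation.ReflTransGen (floorGen n) b a) →
      S.card ≤ 2) ∧
    -- there is an antichain of size 2
    (∃ S : Finset (ℕ × Fin 3), (∀ a ∈ S, a.1 < n) ∧
      (∀ a ∈ S, ∀ b ∈ S, a ≠ b →
        ¬ Relation.ReflTransGen (floorGen n) a b ∧
        ¬ Relation.ReflTransGen (floorGen n) b a) ∧
      S.card = 2) := by
  let chain (j : Fin 3) : Set (ℕ × Fin 3) := {a | a.1 < n ∧ (a.2 = 0 ∨ a.2 = j)}
  have hchain (j : Fin 3) : IsChain (ReflTransGen (floorGen n)) (chain j) :=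
    fun a ha b hb _ => comparable_of_snd_eq_zero_or j ha.1 hb.1 ha.2 hb.2
  have hcover (a : ℕ × Fin 3) (ha : a.1 < n) : a ∈ ⋃ j ∈ ({1, 2} : Finset (Fin 3)), chain j := by
    by_cases h2 : a.2 = 2
    · exact Set.mem_biUnion (by simp) ⟨ha, .inr h2⟩
    · exact Set.mem_biUnion (x := 1) (by simp) ⟨ha, by omega⟩
  refine ⟨fun a b => comparable_of_snd_eq_zero_or 1, fun a b => comparable_of_snd_eq_zero_or 2,
    fun a _ => by omega, fun S hS hanti => ?_, ⟨{(0, 1), (0, 2)}, ?_, ?_, rfl⟩⟩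
  · exact IsAntichain.card_le_of_subset_biUnion_isChain (fun a ha b hb hne =>
      (hanti a ha b hb hne).1) {1, 2} chain (fun j _ => hchain j) fun a ha => hcover a (hS a ha)
  · simp only [Finset.mem_insert, Finset.mem_singleton]
    rintro a (rfl | rfl) <;> exact hn
  · simp only [Finset.mem_insert, Finset.mem_singleton]
    rintro a (rfl | rfl) b (rfl | rfl) hne <;>
      exact ⟨not_reflTransGen_of_rank_eq hne rfl, not_reflTransGen_of_rank_eq hne.symm rfl⟩
end
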